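/- Interval model flow condition (Example 2.4): let A be a differential graded Lie algebra over a field k of characteristic zero, let a and b be points of A, and let e ∈ A_0 have nilpotent adjoint action E := ad_e and satisfy ∂e = −Σ_{i≥0} (B_i/i!) E^i(a) + Σ_{i≥0} (B_i/i!) (−E)^i(b), where B_i are the Bernoulli numbers (equivalently, ∂e = (E/(1−e^E))(a) + (E/(1−e^{−E}))(b), the operators interpreted as the corresponding power series in E, which are finite sums by nilpotency). Then u_e(a) = b, i.e. the flow by e carries a to b in unit time. -/

import Mathlib

/-- A differential graded Lie algebra (DGLA) over a field `k` of characteristic zero: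
a `ℤ`-graded `k`-vector space `A = ⊕ₙ Aₙ` with a bilinear bracket respecting the grading,
graded antisymmetry, the graded Jacobi identity, and a differential `∂` of degree `-1`
with `∂ ∘ ∂ = 0` satisfying the graded Leibniz rule. -/
class DGLA (k : Type*) (A : Type*) [Field k] [CharZero k]
    [AddCommGroup A] [Module k A] where
  bracket : A →ₗ[k] A →ₗ[k] A
  grading : ℤ → Submodule k A
  isInternal : DirectSum.IsInternal grading
  bracket_mem : ∀ (m n : ℤ) (a b : A), a ∈ grading m → b ∈ grading n →
    bracket a b ∈ grading (m + n)
  bracket_antisymm : ∀ (m n : ℤ) (a b : A), a ∈ grading m → b ∈ grading n →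
    bracket b a = -(((-1 : k) ^ (m * n)) • bracket a b)
  jacobi : ∀ (l m n : ℤ) (a b c : A), a ∈ grading l → b ∈ grading m → c ∈ grading n →
    ((-1 : k) ^ (l * m)) • bracket (bracket b c) a
      + ((-1 : k) ^ (m * n)) • bracket (bracket c a) b
      + ((-1 : k) ^ (n * l)) • bracket (bracket a b) c = 0
  d : A →ₗ[k] A
  d_mem : ∀ (n : ℤ) (a : A), a ∈ grading n → d a ∈ grading (n - 1)
  d_sq : ∀ a : A, d (d a) = 0
  leibniz : ∀ (m : ℤ) (a b : A), a ∈ grading m →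
    d (bracket a b) = bracket (d a) b + ((-1 : k) ^ m) • bracket a (d b)

namespace DGLA

variable (k : Type*) {A : Type*} [Field k] [CharZero k] [AddCommGroup A] [Module k A]
  [DGLA k A]

/-- The differential `∂` of the DGLA. -/
noncomputable def D : A →ₗ[k] A := DGLA.d (k := k) (A := A)

/-- The bracket `[x, y]` of the DGLA. -/
noncomputable def br (x y : A) : A := DGLA.bracket (k := k) (A := A) x y

/-- The `n`-th graded piece `Aₙ`. -/
noncomputable def gr (n : ℤ) : Submodule k A := DGLA.grading (k := k) (A := A) n

/-- The adjoint operator `ad_x = [x, ·]`. -/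
noncomputable def ad (x : A) : Module.End k A := DGLA.bracket (k := k) (A := A) x

/-- A *point*: an element of `A₋₁` satisfying the Maurer–Cartan equation
`∂a + (1/2)[a,a] = 0`. -/
def IsPoint (a : A) : Prop :=
  a ∈ gr k (-1) ∧ D k a + (2⁻¹ : k) • br k a a = 0

/-- The twisted differential `∂_a = ∂ + ad_a`. -/
noncomputable def twistD (a : A) : Module.End k A := D k + ad k a

/-- The curvature `κ(a) = ∂a + (1/2)[a,a]`. -/
noncomputable def curv (a : A) : A := D k a + (2⁻¹ : k) • br k a a

/-- The truncated operator power series `Σ_{n<N} (−1)ⁿ fⁿ/n!`; when `f^N = 0` this is the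
exponential `exp(−f)` (a finite sum by nilpotency). -/
noncomputable def expNeg (f : Module.End k A) (N : ℕ) : Module.End k A :=
  ∑ n ∈ Finset.range N, ((-1 : k) ^ n * (Nat.factorial n : k)⁻¹) • f ^ n

/-- The truncated operator power series `F(f) = Σ_{n<N} (−1)ⁿ fⁿ/(n+1)!`; when `f^N = 0`
this is the power series of `(1 − e^{−T})/T` evaluated at `f` (a finite sum by nilpotency). -/
noncomputable def Fser (f : Module.End k A) (N : ℕ) : Module.End k A :=
  ∑ n ∈ Finset.range N, ((-1 : k) ^ n * (Nat.factorial (n + 1) : k)⁻¹) • f ^ n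

/-- The time-one flow `u_e(a) := exp(−ad_e)(a) + F(ad_e)(∂e)` of `e ∈ A₀` applied to
`a ∈ A₋₁`, truncated at order `N` (exact when `(ad_e)^N = 0`). -/
noncomputable def flow (e : A) (N : ℕ) (a : A) : A :=
  expNeg k (ad k e) N a + Fser k (ad k e) N (D k e)

end DGLA

/-! Write `F(T) = (1 - e^{-T}) / T` and `B(T) = T / (e^T - 1)` for the Bernoulli series, so that
the hypothesis reads `∂e = -B(E) a + B(-E) b`. As power series `F(T) B(T) = e^{-T}` and
`F(T) B(-T) = 1`; evaluation at the nilpotent `E` is multiplicative, hence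
`u_e(a) = e^{-E} a + F(E) ∂e = e^{-E} a - e^{-E} a + b = b`. -/

open PowerSeries

section TruncEval

variable {k R : Type*} [CommRing k] [Ring R] [Algebra k R]

/-- When `x ^ N = 0` this is the value of `P` at `x`. -/
noncomputable def truncEval (x : R) (N : ℕ) (P : k⟦X⟧) : R :=
  Polynomial.aeval x (trunc N P)

theorem truncEval_eq_sum (x : R) (N : ℕ) (P : k⟦X⟧) :
    truncEval x N P = ∑ n ∈ Finset.range N, coeff n P • x ^ n := by
  simp only [truncEval, Polynomial.aeval_def, eval₂_trunc_eq_sum_range, Algebra.smul_def]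

theorem aeval_trunc_coe_of_pow_eq_zero {x : R} {N : ℕ} (hN : x ^ N = 0) (p : Polynomial k) :
    Polynomial.aeval x (trunc N (p : k⟦X⟧)) = Polynomial.aeval x p := by
  obtain ⟨q, hq⟩ : (Polynomial.X ^ N : Polynomial k) ∣ p - trunc N (p : k⟦X⟧) :=
    Polynomial.X_pow_dvd_iff.2 fun d hd => by simp [coeff_trunc, hd]
  have h := congrArg (Polynomial.aeval x) hq
  rw [map_sub, map_mul, map_pow, Polynomial.aeval_X, hN, zero_mul, sub_eq_zero] at h
  exact h.symm

theorem truncEval_mul {x : R} {N : ℕ} (hN : x ^ N = 0) (P Q : k⟦X⟧) :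
    truncEval x N (P * Q) = truncEval x N P * truncEval x N Q := by
  rw [truncEval, ← trunc_trunc_mul_trunc, ← Polynomial.coe_mul,
    aeval_trunc_coe_of_pow_eq_zero hN, map_mul, truncEval, truncEval]

theorem truncEval_one {x : R} {N : ℕ} (hN : x ^ N = 0) : truncEval x N (1 : k⟦X⟧) = 1 := by
  rw [truncEval, ← Polynomial.coe_one, aeval_trunc_coe_of_pow_eq_zero hN, map_one]

end TruncEval

section Series

variable (k : Type*) [Field k]

noncomputable def oneSubExpNegDivX : k⟦X⟧ :=
  mk fun n => (-1 : k) ^ n * ((n + 1).factorial : k)⁻¹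

variable [CharZero k]

theorem coeff_evalNegHom_exp (n : ℕ) :
    coeff n (evalNegHom (exp k)) = (-1 : k) ^ n * (n.factorial : k)⁻¹ := by
  simp [evalNegHom, coeff_rescale, coeff_exp, div_eq_mul_inv]

theorem coeff_bernoulliPowerSeries (n : ℕ) :
    coeff n (bernoulliPowerSeries k) = (bernoulli n : k) * (n.factorial : k)⁻¹ := by
  simp [bernoulliPowerSeries, div_eq_mul_inv]

theorem oneSubExpNegDivX_mul_X : oneSubExpNegDivX k * X = 1 - evalNegHom (exp k) := by
  ext (_ | n)
  · rw [coeff_zero_mul_X, map_sub, coeff_evalNegHom_exp]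
    simp
  · rw [coeff_succ_mul_X, map_sub, coeff_evalNegHom_exp]
    simp only [oneSubExpNegDivX, coeff_mk, coeff_one, Nat.succ_ne_zero, if_false, zero_sub,
      pow_succ]
    ring

theorem oneSubExpNegDivX_mul_bernoulliPowerSeries :
    oneSubExpNegDivX k * bernoulliPowerSeries k = evalNegHom (exp k) := by
  have hexp : (exp k - 1 : k⟦X⟧) ≠ 0 := fun h => by
    simpa [coeff_exp] using congrArg (coeff 1) h
  apply mul_right_cancel₀ hexp
  rw [mul_assoc, bernoulliPowerSeries_mul_exp_sub_one, oneSubExpNegDivX_mul_X]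
  linear_combination -(exp_mul_exp_neg_eq_one (A := k))

theorem oneSubExpNegDivX_mul_evalNegHom_bernoulliPowerSeries :
    oneSubExpNegDivX k * evalNegHom (bernoulliPowerSeries k) = 1 := by
  have hexp : (evalNegHom (exp k - 1) : k⟦X⟧) ≠ 0 := fun h => by
    simpa [coeff_evalNegHom_exp] using congrArg (coeff 1) h
  apply mul_right_cancel₀ hexp
  rw [mul_assoc, ← map_mul, bernoulliPowerSeries_mul_exp_sub_one, evalNegHom_X, mul_neg,
    oneSubExpNegDivX_mul_X, map_sub, map_one]
  ring

end Series

namespace DGLA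

variable {k A : Type*} [Field k] [AddCommGroup A] [Module k A]

theorem expNeg_eq_truncEval [CharZero k] (f : Module.End k A) (N : ℕ) :
    expNeg k f N = truncEval f N (evalNegHom (exp k)) := by
  simp only [expNeg, truncEval_eq_sum, coeff_evalNegHom_exp]

theorem Fser_eq_truncEval (f : Module.End k A) (N : ℕ) :
    Fser k f N = truncEval f N (oneSubExpNegDivX k) := by
  simp only [Fser, truncEval_eq_sum, oneSubExpNegDivX, coeff_mk]

end DGLA

open DGLA in
theorem interval_flow_general {k A : Type*} [Field k] [CharZero k]
    [AddCommGroup A] [Module k A] [DGLA k A]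
    (a b e : A)
    (N : ℕ) (hN : ad k e ^ N = 0)
    (hde : D k e =
      -(∑ i ∈ Finset.range N, ((bernoulli i : k) * (Nat.factorial i : k)⁻¹) •
          ((ad k e ^ i) a))
      + ∑ i ∈ Finset.range N, ((bernoulli i : k) * (Nat.factorial i : k)⁻¹) •
          (((-1 : k) ^ i) • ((ad k e ^ i) b))) :
    flow k e N a = b := by
  have hB : ∑ i ∈ Finset.range N, ((bernoulli i : k) * (Nat.factorial i : k)⁻¹) •
      (ad k e ^ i) a = truncEval (ad k e) N (bernoulliPowerSeries k) a := by
    simp only [truncEval_eq_sum, LinearMap.sum_apply, LinearMap.smul_apply,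
      coeff_bernoulliPowerSeries]
  have hBneg : ∑ i ∈ Finset.range N, ((bernoulli i : k) * (Nat.factorial i : k)⁻¹) •
      ((-1 : k) ^ i) • (ad k e ^ i) b
      = truncEval (ad k e) N (evalNegHom (bernoulliPowerSeries k)) b := by
    simp only [truncEval_eq_sum, LinearMap.sum_apply, LinearMap.smul_apply, smul_smul,
      evalNegHom, coeff_rescale, coeff_bernoulliPowerSeries, mul_comm]
  have hFB : truncEval (ad k e) N (oneSubExpNegDivX k) *
      truncEval (ad k e) N (bernoulliPowerSeries k) =
        truncEval (ad k e) N (evalNegHom (exp k)) := by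
    rw [← truncEval_mul hN, oneSubExpNegDivX_mul_bernoulliPowerSeries]
  have hFBneg : truncEval (ad k e) N (oneSubExpNegDivX k) *
      truncEval (ad k e) N (evalNegHom (bernoulliPowerSeries k)) = 1 := by
    rw [← truncEval_mul hN, oneSubExpNegDivX_mul_evalNegHom_bernoulliPowerSeries,
      truncEval_one hN]
  rw [flow, hde, hB, hBneg, expNeg_eq_truncEval, Fser_eq_truncEval, map_add, map_neg,
    ← Module.End.mul_apply, hFB, ← Module.End.mul_apply, hFBneg, Module.End.one_apply,
    add_neg_cancel_left]

open DGLA in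
/-- interval model flow condition (Example 2.4). In a DGLA over a field `k` of
characteristic zero, let `a`, `b` be points and let `e ∈ A₀` have nilpotent adjoint action
`E := ad_e` (with `E^N = 0`). If
`∂e = −Σ_i (B_i/i!) E^i(a) + Σ_i (B_i/i!) (−E)^i(b)`
(the Bernoulli-number power series `E/(1−e^E)` applied to `a` plus `E/(1−e^{−E})` applied to
`b`, finite sums by nilpotency), then `u_e(a) = b`: the flow by `e` carries `a` to `b` in
unit time. -/
theorem interval_flow {k A : Type*} [Field k] [CharZero k]
    [AddCommGroup A] [Module k A] [DGLA k A]
    (a b e : A) (ha : IsPoint k a) (hb : IsPoint k b) (he : e ∈ gr k 0)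
    (N : ℕ) (hN : ad k e ^ N = 0)
    (hde : D k e =
      -(∑ i ∈ Finset.range N, ((bernoulli i : k) * (Nat.factorial i : k)⁻¹) •
          ((ad k e ^ i) a))
      + ∑ i ∈ Finset.range N, ((bernoulli i : k) * (Nat.factorial i : k)⁻¹) •
          (((-1 : k) ^ i) • ((ad k e ^ i) b))) :
    flow k e N a = b :=
  interval_flow_general a b e N hN hde
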